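/- Let h ≥ 1 and d₁, …, d_h be positive integers with d = d₁ + ⋯ + d_h. Let C ∈ ℝ^{d×d} be a block matrix with blocks C_{ij} ∈ ℝ^{d_i×d_j} such that C_{ii} = 0 for all i and ‖C_{ij}‖₂ ≤ δ for all i ≠ j, where δ ≥ 0. Then ‖C‖₂ ≤ (h − 1)δ. -/

import Mathlib

noncomputable section

/-- The block Euclidean space `ℝ^{d₁} × ⋯ × ℝ^{d_h}` with the ℓ² product norm,
identified with `ℝ^d`, `d = d₁ + ⋯ + d_h`. -/
abbrev Blk {h : ℕ} (d : Fin h → ℕ) : Type :=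
  PiLp 2 fun i : Fin h => EuclideanSpace ℝ (Fin (d i))

/-- Projection onto the `i`-th block, as a continuous linear map. -/
noncomputable def blkProj {h : ℕ} (d : Fin h → ℕ) (i : Fin h) :
    Blk d →L[ℝ] EuclideanSpace ℝ (Fin (d i)) :=
  PiLp.proj 2 (fun i : Fin h => EuclideanSpace ℝ (Fin (d i))) i

/-- Inclusion of the `i`-th block, as a continuous linear map. -/
noncomputable def blkIncl {h : ℕ} (d : Fin h → ℕ) (i : Fin h) :
    EuclideanSpace ℝ (Fin (d i)) →L[ℝ] Blk d :=
  LinearMap.toContinuousLinearMap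
    (((WithLp.linearEquiv 2 ℝ (∀ i : Fin h, EuclideanSpace ℝ (Fin (d i)))).symm.toLinearMap).comp
      (LinearMap.single ℝ (fun i : Fin h => EuclideanSpace ℝ (Fin (d i))) i))

/-- The `(i,j)` block of a square map `C : ℝ^d →L ℝ^d`. -/
noncomputable def blkOf {h : ℕ} {d : Fin h → ℕ} (C : Blk d →L[ℝ] Blk d) (i j : Fin h) :
    EuclideanSpace ℝ (Fin (d j)) →L[ℝ] EuclideanSpace ℝ (Fin (d i)) :=
  (blkProj d i).comp (C.comp (blkIncl d j))

open Finset

/-! Each block row of a hollow matrix sees only the `h - 1` other blocks of `x`, so by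
Cauchy–Schwarz `Σᵢ (Σ_{j ≠ i} ‖xⱼ‖)² ≤ Σᵢ (h - 1) Σ_{j ≠ i} ‖xⱼ‖² = (h - 1)² ‖x‖²`. -/

theorem sum_sq_sum_erase_le {ι : Type*} [Fintype ι] [DecidableEq ι] (a : ι → ℝ) :
    ∑ i, (∑ j ∈ univ.erase i, a j) ^ 2 ≤ ((Fintype.card ι : ℝ) - 1) ^ 2 * ∑ i, a i ^ 2 := by
  calc ∑ i, (∑ j ∈ univ.erase i, a j) ^ 2
      ≤ ∑ i, ((Fintype.card ι : ℝ) - 1) * ∑ j ∈ univ.erase i, a j ^ 2 := by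
        gcongr with i
        have := sq_sum_le_card_mul_sum_sq (s := univ.erase i) (f := a)
        rwa [cast_card_erase_of_mem (mem_univ i), card_univ] at this
    _ = ((Fintype.card ι : ℝ) - 1) * ∑ i, (∑ j, a j ^ 2 - a i ^ 2) := by
        simp only [← mul_sum, sum_erase_eq_sub (mem_univ _)]
    _ = ((Fintype.card ι : ℝ) - 1) ^ 2 * ∑ i, a i ^ 2 := by
        rw [sum_sub_distrib, sum_const, card_univ, nsmul_eq_mul]
        ring

theorem sum_blkIncl_apply {h : ℕ} {d : Fin h → ℕ} (x : Blk d) :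
    ∑ j, blkIncl d j (x j) = x := by
  apply WithLp.ofLp_injective 2
  rw [WithLp.ofLp_sum]
  exact univ_sum_single x.ofLp

theorem apply_apply_eq_sum_blkOf {h : ℕ} {d : Fin h → ℕ} (C : Blk d →L[ℝ] Blk d) (x : Blk d)
    (i : Fin h) : C x i = ∑ j, blkOf C i j (x j) := by
  conv_lhs => rw [← sum_blkIncl_apply x, map_sum]
  exact map_sum (blkProj d i) _ _

theorem norm_apply_apply_le_of_blkOf {h : ℕ} {d : Fin h → ℕ} {δ : ℝ} {C : Blk d →L[ℝ] Blk d}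
    (hdiag : ∀ i, blkOf C i i = 0) (hoff : ∀ i j, i ≠ j → ‖blkOf C i j‖ ≤ δ)
    (x : Blk d) (i : Fin h) : ‖C x i‖ ≤ δ * ∑ j ∈ univ.erase i, ‖x j‖ := by
  rw [apply_apply_eq_sum_blkOf, ← add_sum_erase _ _ (mem_univ i), hdiag,
    zero_apply, zero_add, mul_sum]
  refine (norm_sum_le _ _).trans (sum_le_sum fun j hj => ?_)
  exact (blkOf C i j).le_of_opNorm_le (hoff i j (ne_of_mem_erase hj).symm) _

theorem norm_sq_apply_le_of_blkOf {h : ℕ} {d : Fin h → ℕ} {δ : ℝ} {C : Blk d →L[ℝ] Blk d}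
    (hdiag : ∀ i, blkOf C i i = 0) (hoff : ∀ i j, i ≠ j → ‖blkOf C i j‖ ≤ δ) (x : Blk d) :
    ‖C x‖ ^ 2 ≤ (((h : ℝ) - 1) * δ * ‖x‖) ^ 2 :=
  calc ‖C x‖ ^ 2 = ∑ i, ‖C x i‖ ^ 2 := PiLp.norm_sq_eq_of_L2 _ _
    _ ≤ ∑ i, (δ * ∑ j ∈ univ.erase i, ‖x j‖) ^ 2 := by
        gcongr with i
        exact norm_apply_apply_le_of_blkOf hdiag hoff x i
    _ = δ ^ 2 * ∑ i, (∑ j ∈ univ.erase i, ‖x j‖) ^ 2 := by simp_rw [mul_pow, ← mul_sum]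
    _ ≤ δ ^ 2 * (((h : ℝ) - 1) ^ 2 * ∑ i, ‖x i‖ ^ 2) := by
        gcongr
        simpa using sum_sq_sum_erase_le fun i => ‖x i‖
    _ = (((h : ℝ) - 1) * δ * ‖x‖) ^ 2 := by
        rw [mul_pow, PiLp.norm_sq_eq_of_L2 _ x]; ring

theorem block_hollow_opNorm_le_general
    {h : ℕ} (hh : 1 ≤ h) (d : Fin h → ℕ)
    (δ : ℝ) (hδ : 0 ≤ δ)
    (C : Blk d →L[ℝ] Blk d)
    (hdiag : ∀ i, blkOf C i i = 0)
    (hoff : ∀ i j, i ≠ j → ‖blkOf C i j‖ ≤ δ) :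
    ‖C‖ ≤ ((h : ℝ) - 1) * δ := by
  have hbound : 0 ≤ ((h : ℝ) - 1) * δ :=
    mul_nonneg (sub_nonneg.mpr (by exact_mod_cast hh)) hδ
  refine C.opNorm_le_bound hbound fun x => ?_
  exact (pow_le_pow_iff_left₀ (norm_nonneg _) (by positivity) two_ne_zero).mp
    (norm_sq_apply_le_of_blkOf hdiag hoff x)

/-- **Operator-norm estimate for block-hollow matrices.**
If `C ∈ ℝ^{d×d}` has blocks `C_{ij} ∈ ℝ^{d_i×d_j}` with `C_{ii} = 0` and
`‖C_{ij}‖₂ ≤ δ` for `i ≠ j`, then `‖C‖₂ ≤ (h − 1)δ`. -/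
theorem block_hollow_opNorm_le
    {h : ℕ} (hh : 1 ≤ h) (d : Fin h → ℕ) (hd : ∀ i, 0 < d i)
    (δ : ℝ) (hδ : 0 ≤ δ)
    (C : Blk d →L[ℝ] Blk d)
    (hdiag : ∀ i, blkOf C i i = 0)
    (hoff : ∀ i j, i ≠ j → ‖blkOf C i j‖ ≤ δ) :
    ‖C‖ ≤ ((h : ℝ) - 1) * δ :=
  block_hollow_opNorm_le_general hh d δ hδ C hdiag hoff
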